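/- Let V₁, ..., V_n be exchangeable real random variables and V_{n+1} exchangeable with them (i.e., (V₁,...,V_{n+1}) is exchangeable). Let q̂ be the ⌈(n+1)(1−α)⌉-th smallest value among V₁, ..., V_n (for α ∈ (0,1) with ⌈(n+1)(1−α)⌉ ≤ n). Then Pr(V_{n+1} ≤ q̂) ≥ 1 − α. -/

import Mathlib

/-! Call the rank of a score the number of scores strictly below it. Whatever the values, at
least `k` of the `n + 1` scores have rank below `k`, and by exchangeability each score has rank
below `k` with the same probability, which is therefore at least `k / (n + 1) ≥ 1 - α`. For the
test score, rank below `k` means exactly lying at or below the `k`-th smallest calibration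
score. -/

open Finset MeasureTheory
open scoped ENNReal

section OrderStatistics

variable {ι α : Type*} [Fintype ι]

/-- The `k`-th smallest entry of `w`, counted with multiplicity (for `1 ≤ k ≤ card ι`). -/
noncomputable def kthSmallest [ConditionallyCompleteLinearOrder α] (k : ℕ) (w : ι → α) : α :=
  sInf {x : α | k ≤ #{i | w i ≤ x}}

def rank [LinearOrder α] (w : ι → α) (j : ι) : ℕ :=
  #{i | w i < w j}

theorem le_kthSmallest_iff [ConditionallyCompleteLinearOrder α] {k : ℕ} (hk : 1 ≤ k)
    (hkι : k ≤ Fintype.card ι) (w : ι → α) (t : α) :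
    t ≤ kthSmallest k w ↔ #{i | w i < t} < k := by
  have hι : (univ : Finset ι).Nonempty :=
    univ_nonempty_iff.mpr (Fintype.card_pos_iff.mp (by omega))
  have hbdd : BddBelow {x : α | k ≤ #{i | w i ≤ x}} := by
    refine ⟨univ.inf' hι w, fun x hx => ?_⟩
    obtain ⟨i, hi⟩ := card_pos.mp (lt_of_lt_of_le hk hx)
    exact (inf'_le w (mem_univ i)).trans (mem_filter.mp hi).2
  constructor
  · intro ht
    by_contra! hcount
    have hne : ({i | w i < t} : Finset ι).Nonempty := card_pos.mp (by omega)
    -- the largest entry below `t` already has `k` entries at or below it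
    have hmem : Finset.sup' _ hne w ∈ {x : α | k ≤ #{i | w i ≤ x}} :=
      hcount.trans (card_le_card fun i hi => mem_filter.mpr ⟨mem_univ i, le_sup' w hi⟩)
    have hlt : Finset.sup' _ hne w < t := (sup'_lt_iff hne).mpr fun i hi => (mem_filter.mp hi).2
    exact (ht.trans (csInf_le hbdd hmem)).not_gt hlt
  · intro hcount
    have hsup : univ.sup' hι w ∈ {x : α | k ≤ #{i | w i ≤ x}} := by
      rw [Set.mem_ofPred_eq, filter_true_of_mem fun i _ => le_sup' w (mem_univ i), card_univ]
      exact hkι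
    refine le_csInf ⟨_, hsup⟩ fun x hx => ?_
    by_contra! hxt
    have hsub : ({i | w i ≤ x} : Finset ι) ⊆ ({i | w i < t} : Finset ι) :=
      fun i hi => mem_filter.mpr ⟨mem_univ i, (mem_filter.mp hi).2.trans_lt hxt⟩
    exact (hx.trans (card_le_card hsub)).not_gt hcount

theorem le_card_filter_rank_lt [LinearOrder α] {k : ℕ} (hkι : k ≤ Fintype.card ι)
    (w : ι → α) : k ≤ #{j | rank w j < k} := by
  classical
  by_contra! hsmall
  have hne : ({j | ¬rank w j < k} : Finset ι).Nonempty := by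
    rw [← card_pos, filter_not, card_sdiff_of_subset (filter_subset _ _), card_univ]
    omega
  -- an entry of minimal value outside the set has all smaller entries inside it
  obtain ⟨j, hj, hmin⟩ := exists_min_image _ w hne
  have hsub : ({i | w i < w j} : Finset ι) ⊆ ({j | rank w j < k} : Finset ι) := by
    intro i hi
    by_contra hi'
    exact (hmin i (by simpa using hi')).not_gt (mem_filter.mp hi).2
  exact (mem_filter.mp hj).2 ((card_le_card hsub).trans_lt hsmall)

theorem rank_comp_perm [LinearOrder α] (w : ι → α) (σ : Equiv.Perm ι) (j : ι) :
    rank (w ∘ σ) j = rank w (σ j) := by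
  refine card_bij (fun i _ => σ i) (by simp) (fun _ _ _ _ h => σ.injective h) fun i hi => ?_
  exact ⟨σ.symm i, by simpa using hi, σ.apply_symm_apply i⟩

theorem rank_last {n : ℕ} [LinearOrder α] (w : Fin (n + 1) → α) :
    rank w (Fin.last n) = #{i : Fin n | w i.castSucc < w (Fin.last n)} := by
  simp only [rank, card_filter, Fin.sum_univ_castSucc, lt_irrefl, if_false, add_zero]

theorem measurable_rank (j : ι) : Measurable fun w : ι → ℝ => rank w j := by
  simp only [rank, card_filter]
  exact Finset.measurable_sum _ fun i _ => Measurable.ite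
    (measurableSet_lt (measurable_pi_apply i) (measurable_pi_apply j))
    measurable_const measurable_const

end OrderStatistics

section Exchangeability

variable {Ω ι : Type*} [MeasurableSpace Ω] [Fintype ι]

theorem measure_rank_lt_eq {P : Measure Ω} {X : Ω → ι → ℝ} (hX : Measurable X)
    (hexch : ∀ σ : Equiv.Perm ι, P.map (fun ω i => X ω (σ i)) = P.map X) (k : ℕ) (j j' : ι) :
    P {ω | rank (X ω) j < k} = P {ω | rank (X ω) j' < k} := by
  classical
  have hXσ : Measurable fun ω i => X ω (Equiv.swap j j' i) :=
    measurable_pi_lambda _ fun i => (measurable_pi_apply _).comp hX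
  have hevent : {ω | rank (X ω) j < k}
      = (fun ω i => X ω (Equiv.swap j j' i)) ⁻¹' {w | rank w j' < k} := by
    ext ω
    simp [← Function.comp_def, rank_comp_perm]
  rw [hevent]
  exact (ProbabilityTheory.IdentDistrib.mk hXσ.aemeasurable hX.aemeasurable
    (hexch _)).measure_mem_eq (measurable_rank j' measurableSet_Iio)

theorem natCast_le_sum_measure_of_le_card {P : Measure Ω} [IsProbabilityMeasure P]
    {p : ι → Ω → Prop} [∀ j ω, Decidable (p j ω)] (hp : ∀ j, MeasurableSet {ω | p j ω}) {k : ℕ}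
    (hk : ∀ ω, k ≤ #{j | p j ω}) :
    (k : ℝ≥0∞) ≤ ∑ j, P {ω | p j ω} := by
  calc (k : ℝ≥0∞) = ∫⁻ _, (k : ℝ≥0∞) ∂P := by simp
    _ ≤ ∫⁻ ω, ∑ j, {ω | p j ω}.indicator 1 ω ∂P := lintegral_mono fun ω => by
        simpa [Set.indicator_apply, ← card_filter] using hk ω
    _ = ∑ j, P {ω | p j ω} := by
        rw [lintegral_finsetSum _ fun j _ => measurable_one.indicator (hp j)]
        simp [lintegral_indicator_one (hp _)]

end Exchangeability

theorem stmt_11_general {Ω : Type*} [MeasurableSpace Ω] (P : Measure Ω) [IsProbabilityMeasure P]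
    (n : ℕ) (V : Fin (n + 1) → Ω → ℝ) (hV : ∀ i, Measurable (V i))
    (hexch : ∀ σ : Equiv.Perm (Fin (n + 1)),
      P.map (fun ω => fun i => V (σ i) ω) = P.map (fun ω => fun i => V i ω))
    (α : ℝ) (hα1 : α < 1)
    (hk : ⌈((n : ℝ) + 1) * (1 - α)⌉₊ ≤ n)
    (qhat : Ω → ℝ)
    (hqhat : ∀ ω, qhat ω = sInf {x : ℝ |
      ⌈((n : ℝ) + 1) * (1 - α)⌉₊ ≤
        (Finset.univ.filter (fun i : Fin n => V i.castSucc ω ≤ x)).card}) :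
    ENNReal.ofReal (1 - α) ≤ P {ω | V (Fin.last n) ω ≤ qhat ω} := by
  set k := ⌈((n : ℝ) + 1) * (1 - α)⌉₊
  have hk1 : 1 ≤ k := Nat.one_le_ceil_iff.mpr (mul_pos (by positivity) (by linarith))
  set X : Ω → Fin (n + 1) → ℝ := fun ω i => V i ω
  have hX : Measurable X := measurable_pi_lambda _ hV
  set A : Fin (n + 1) → Set Ω := fun j => {ω | rank (X ω) j < k}
  have hevent : {ω | V (Fin.last n) ω ≤ qhat ω} = A (Fin.last n) := by
    ext ω
    simp only [Set.mem_ofPred_eq, A, hqhat, rank_last]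
    exact le_kthSmallest_iff hk1 (by simpa using hk) _ _
  have hcount : (k : ℝ≥0∞) ≤ (n + 1) * P (A (Fin.last n)) :=
    calc (k : ℝ≥0∞) ≤ ∑ j, P (A j) :=
          natCast_le_sum_measure_of_le_card (p := fun j ω => rank (X ω) j < k)
            (fun j => hX (measurable_rank j measurableSet_Iio))
            fun ω => le_card_filter_rank_lt (by simpa using hk.trans n.le_succ) (X ω)
      _ = (n + 1) * P (A (Fin.last n)) := by
          simp [A, measure_rank_lt_eq hX hexch k _ (Fin.last n)]
  rw [hevent, ← ENNReal.mul_le_mul_iff_right (by simp : ((n : ℝ≥0∞) + 1) ≠ 0) (by simp)]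
  calc ((n : ℝ≥0∞) + 1) * ENNReal.ofReal (1 - α)
      = ENNReal.ofReal (((n : ℝ) + 1) * (1 - α)) := by
        rw [ENNReal.ofReal_mul (by positivity)]
        norm_cast
    _ ≤ k := ENNReal.ofReal_le_of_le_toReal (by simpa using Nat.le_ceil _)
    _ ≤ (n + 1) * P (A (Fin.last n)) := hcount

/-- Split conformal prediction coverage: if `(V₁, ..., V_{n+1})` is exchangeable and
`q̂` is the `⌈(n+1)(1−α)⌉`-th smallest value among `V₁, ..., V_n`, then
`Pr(V_{n+1} ≤ q̂) ≥ 1 − α`. The k-th smallest value is expressed as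
`sInf {x | #{i ≤ n : Vᵢ ≤ x} ≥ k}`. -/
theorem stmt_11 {Ω : Type*} [MeasurableSpace Ω] (P : Measure Ω) [IsProbabilityMeasure P]
    (n : ℕ) (V : Fin (n + 1) → Ω → ℝ) (hV : ∀ i, Measurable (V i))
    (hexch : ∀ σ : Equiv.Perm (Fin (n + 1)),
      P.map (fun ω => fun i => V (σ i) ω) = P.map (fun ω => fun i => V i ω))
    (α : ℝ) (hα0 : 0 < α) (hα1 : α < 1)
    (hk : ⌈((n : ℝ) + 1) * (1 - α)⌉₊ ≤ n)
    (qhat : Ω → ℝ)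
    (hqhat : ∀ ω, qhat ω = sInf {x : ℝ |
      ⌈((n : ℝ) + 1) * (1 - α)⌉₊ ≤
        (Finset.univ.filter (fun i : Fin n => V i.castSucc ω ≤ x)).card}) :
    ENNReal.ofReal (1 - α) ≤ P {ω | V (Fin.last n) ω ≤ qhat ω} :=
  stmt_11_general P n V hV hexch α hα1 hk qhat hqhat
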